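/- arXiv:2011.15058 — 2 statements merged into one kernel-verified Lean document; each statement's English description precedes it below -/
import Mathlib

section
/- Let λ > 0, T > 0, n ≥ 1, and R > 0. Then ∫₀ᵗ ∫_{B(x,R+1) \ B(x,R)} [ n(t−s)^{−(n+1)/2} + (t−s)^{−n/2} ] exp(−λ|x−y|²/(4(t−s))) dy ds ≤ (|s_n|/2)(4/λ)^{n/2} (T + 2n√T) · Γ_up(n/2, λR²/(4T)) for every x ∈ ℝⁿ and t ∈ (0,T], where |s_n| is the surface area of the unit sphere in ℝⁿ and Γ_up(a,z) = ∫_z^∞ e^{−w} w^{a−1} dw is the upper incomplete Gamma function. In particular, this bound tends to 0 as R → ∞, uniformly in x and t. -/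
open MeasureTheory Real Set Metric Filter

/-- Surface area of the unit sphere in ℝⁿ: `2 π^{n/2} / Γ(n/2)`. -/
noncomputable def unitSphereArea (n : ℕ) : ℝ :=
  2 * π ^ ((n : ℝ) / 2) / Real.Gamma ((n : ℝ) / 2)

/-- The upper incomplete Gamma function `Γ_up(a, z) = ∫_z^∞ e^{-w} w^{a-1} dw`. -/
noncomputable def GammaUp (a z : ℝ) : ℝ :=
  ∫ w in Ioi z, Real.exp (-w) * w ^ (a - 1)

/-! Fix `s` and put `τ = t - s`. In polar coordinates about `x` the spatial integral over the
annulus is at most `|s_n| ∫_R^∞ r^{n-1} e^{-λr²/(4τ)} dr`, and the substitution `z = λr²/(4τ)`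
turns this into `(|s_n|/2) (4τ/λ)^{n/2} Γ_up(n/2, λR²/(4τ))`, where `Γ_up(n/2, ·)` is decreasing
and `τ ≤ T`. The factor `τ^{n/2}` turns the time weight `n τ^{-(n+1)/2} + τ^{-n/2}` into
`n τ^{-1/2} + 1`, whose integral over `[0, t]` is `2n√t + t ≤ T + 2n√T`. -/

open Module

theorem gammaUp_nonneg (a : ℝ) {z : ℝ} (hz : 0 ≤ z) : 0 ≤ GammaUp a z :=
  setIntegral_nonneg measurableSet_Ioi fun w hw => by
    have := hz.trans (le_of_lt hw)
    positivity

theorem gammaUp_antitoneOn {a : ℝ} (ha : 0 < a) : AntitoneOn (GammaUp a) (Ici 0) := by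
  intro z₁ hz₁ z₂ _ h
  refine setIntegral_mono_set ((GammaIntegral_convergent ha).mono_set (Ioi_subset_Ioi hz₁)) ?_
    (Ioi_subset_Ioi h).eventuallyLE
  filter_upwards [ae_restrict_mem measurableSet_Ioi] with w (hw : z₁ < w)
  have := hz₁.out.trans hw.le
  positivity

theorem tendsto_gammaUp_atTop (a : ℝ) : Tendsto (GammaUp a) atTop (nhds 0) :=
  tendsto_integral_Ioi_zero tendsto_id

theorem image_mul_sq_Ioi {c R : ℝ} (hc : 0 < c) (hR : 0 ≤ R) :
    (fun r => c * r ^ 2) '' Ioi R = Ioi (c * R ^ 2) := by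
  ext w
  constructor
  · rintro ⟨r, hr, rfl⟩
    exact mul_lt_mul_of_pos_left (pow_lt_pow_left₀ hr hR two_ne_zero) hc
  · intro hw
    have hw' : R ^ 2 < w / c := by rw [lt_div_iff₀ hc]; linarith [mem_Ioi.mp hw]
    refine ⟨√(w / c), (lt_sqrt hR).2 hw', ?_⟩
    show c * √(w / c) ^ 2 = w
    rw [sq_sqrt (by nlinarith), mul_div_cancel₀ _ hc.ne']

theorem integral_Ioi_rpow_mul_exp_neg_mul_sq (a : ℝ) {c R : ℝ} (hc : 0 < c) (hR : 0 ≤ R) :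
    ∫ r in Ioi R, r ^ (2 * a - 1) * exp (-c * r ^ 2) = c ^ (-a) / 2 * GammaUp a (c * R ^ 2) := by
  have hsubst := integral_image_eq_integral_abs_deriv_smul (s := Ioi R) measurableSet_Ioi
    (fun r _ => ((hasDerivAt_pow 2 r).const_mul c).hasDerivWithinAt)
    (fun r (hr : R < r) r' (hr' : R < r') h =>
      (pow_left_inj₀ (hR.trans hr.le) (hR.trans hr'.le) two_ne_zero).1
        (mul_left_cancel₀ hc.ne' h))
    (fun w => exp (-w) * w ^ (a - 1))
  rw [image_mul_sq_Ioi hc hR, ← GammaUp] at hsubst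
  have hpoint : ∀ r ∈ Ioi R,
      |c * ((2 : ℕ) * r ^ (2 - 1))| • (exp (-(c * r ^ 2)) * (c * r ^ 2) ^ (a - 1))
        = 2 * c ^ a * (r ^ (2 * a - 1) * exp (-c * r ^ 2)) := by
    intro r hr
    have hr0 : 0 < r := hR.trans_lt hr
    rw [smul_eq_mul, abs_of_pos (by positivity), mul_rpow hc.le (by positivity),
      ← rpow_natCast r 2, ← rpow_mul hr0.le, rpow_sub_one hc.ne', mul_sub, mul_one,
      rpow_sub hr0, rpow_sub hr0, rpow_one, rpow_natCast]
    field_simp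
    ring_nf
  rw [setIntegral_congr_fun measurableSet_Ioi hpoint, integral_const_mul] at hsubst
  rw [hsubst, rpow_neg hc.le]
  have : 0 < c ^ a := by positivity
  field_simp

section Radial

variable {E : Type*} [NormedAddCommGroup E] [NormedSpace ℝ E] [MeasurableSpace E] [BorelSpace E]
  [FiniteDimensional ℝ E] [Nontrivial E] (μ : Measure E) [μ.IsAddHaarMeasure] {c : ℝ}

theorem integrable_exp_neg_mul_sq_norm (hc : 0 < c) :
    Integrable (fun y : E => exp (-c * ‖y‖ ^ 2)) μ := by
  rw [integrable_fun_norm_addHaar μ (f := fun r => exp (-c * r ^ 2))]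
  have hd : (1 : ℝ) ≤ finrank ℝ E := Nat.one_le_cast.2 finrank_pos
  refine (integrable_rpow_mul_exp_neg_mul_sq hc (s := 2 * ((finrank ℝ E : ℝ) / 2) - 1)
    (by linarith)).integrableOn.congr_fun (fun r _ => ?_) measurableSet_Ioi
  rw [smul_eq_mul, mul_div_cancel₀ _ two_ne_zero, ← rpow_natCast r (finrank ℝ E - 1),
    Nat.cast_pred finrank_pos]

theorem setIntegral_compl_closedBall_exp_neg_mul_sq_norm_sub (hc : 0 < c) {R : ℝ}
    (hR : 0 ≤ R) (x : E) :
    ∫ y in (closedBall x R)ᶜ, exp (-c * ‖x - y‖ ^ 2) ∂μ =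
      finrank ℝ E * μ.real (ball 0 1) *
        (c ^ (-((finrank ℝ E : ℝ) / 2)) / 2 *
          GammaUp ((finrank ℝ E : ℝ) / 2) (c * R ^ 2)) := by
  set g : ℝ → ℝ := (Ioi R).indicator fun r => exp (-c * r ^ 2)
  have hg : (closedBall x R)ᶜ.indicator (fun y => exp (-c * ‖x - y‖ ^ 2)) =
      fun y => g ‖y - x‖ := by
    ext y
    simp only [g, indicator, mem_compl_iff, mem_closedBall, not_le, dist_eq_norm, mem_Ioi,
      norm_sub_rev x y]
  have hradial : ∫ r in Ioi 0, r ^ (finrank ℝ E - 1) • g r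
      = ∫ r in Ioi R, r ^ (2 * ((finrank ℝ E : ℝ) / 2) - 1) * exp (-c * r ^ 2) := by
    rw [← Ioi_inter_Ioi.trans (congrArg Ioi (sup_eq_right.2 hR)),
      ← setIntegral_indicator measurableSet_Ioi]
    refine setIntegral_congr_fun measurableSet_Ioi fun r _ => ?_
    rw [smul_eq_mul, indicator_mul_right, ← rpow_natCast r (finrank ℝ E - 1),
      Nat.cast_pred finrank_pos, mul_div_cancel₀ _ two_ne_zero]
  rw [← integral_indicator measurableSet_closedBall.compl, hg,
    integral_sub_right_eq_self (fun y => g ‖y‖) x, integral_fun_norm_addHaar μ g, hradial,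
    integral_Ioi_rpow_mul_exp_neg_mul_sq _ hc hR, nsmul_eq_mul, smul_eq_mul, mul_assoc]

end Radial

theorem unitSphereArea_eq_mul_volume_ball {n : ℕ} (hn : 1 ≤ n) :
    unitSphereArea n = n * volume.real (ball (0 : EuclideanSpace ℝ (Fin n)) 1) := by
  have : Nonempty (Fin n) := ⟨⟨0, hn⟩⟩
  have hn2 : (n : ℝ) / 2 ≠ 0 := by positivity
  rw [measureReal_def, EuclideanSpace.volume_ball, Fintype.card_fin, ENNReal.ofReal_one, one_pow,
    one_mul, ENNReal.toReal_ofReal (by positivity), Gamma_add_one hn2, sqrt_eq_rpow,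
    ← rpow_mul_natCast pi_pos.le, unitSphereArea]
  field_simp

theorem unitSphereArea_nonneg (n : ℕ) (hn : 1 ≤ n) : 0 ≤ unitSphereArea n := by
  rw [unitSphereArea_eq_mul_volume_ball hn]
  positivity

theorem setIntegral_annulus_exp_neg_mul_sq_norm_sub_le {n : ℕ} (hn : 1 ≤ n) {c R : ℝ}
    (hc : 0 < c) (hR : 0 ≤ R) (x : EuclideanSpace ℝ (Fin n)) :
    ∫ y in closedBall x (R + 1) \ closedBall x R, exp (-c * ‖x - y‖ ^ 2) ≤
      unitSphereArea n * (c ^ (-((n : ℝ) / 2)) / 2 * GammaUp ((n : ℝ) / 2) (c * R ^ 2)) := by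
  have : Nonempty (Fin n) := ⟨⟨0, hn⟩⟩
  have h := setIntegral_compl_closedBall_exp_neg_mul_sq_norm_sub volume hc hR x
  rw [finrank_euclideanSpace_fin] at h
  rw [unitSphereArea_eq_mul_volume_ball hn, ← h]
  exact setIntegral_mono_set
    ((integrable_exp_neg_mul_sq_norm volume hc).comp_sub_left x).integrableOn
    (ae_of_all _ fun y => (exp_pos _).le) (sdiff_subset_compl _ _).eventuallyLE

theorem setIntegral_annulus_heat_le {n : ℕ} (hn : 1 ≤ n) {lam T R τ : ℝ} (hlam : 0 < lam)
    (hR : 0 ≤ R) (hτ : 0 ≤ τ) (hτT : τ ≤ T) (x : EuclideanSpace ℝ (Fin n)) :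
    ∫ y in closedBall x (R + 1) \ closedBall x R,
        ((n : ℝ) * τ ^ (-((n : ℝ) + 1) / 2) + τ ^ (-(n : ℝ) / 2)) *
          exp (-lam * ‖x - y‖ ^ 2 / (4 * τ)) ≤
      unitSphereArea n / 2 * (4 / lam) ^ ((n : ℝ) / 2) *
        GammaUp ((n : ℝ) / 2) (lam * R ^ 2 / (4 * T)) * (n * τ ^ (-(1 : ℝ) / 2) + 1) := by
  have hn0 : (0 : ℝ) < n := Nat.cast_pos.2 hn
  have hS := unitSphereArea_nonneg n hn
  rcases hτ.eq_or_lt with rfl | hτ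
  · -- at `τ = 0` the weight vanishes, since `0 ^ p = 0` for real `p ≠ 0`
    rw [zero_rpow (by linarith : -((n : ℝ) + 1) / 2 < 0).ne,
      zero_rpow (by linarith : -(n : ℝ) / 2 < 0).ne, zero_rpow (by norm_num)]
    simp only [mul_zero, add_zero, zero_mul, integral_zero, zero_add, mul_one]
    have := gammaUp_nonneg ((n : ℝ) / 2) (z := lam * R ^ 2 / (4 * T)) (by positivity)
    positivity
  set A := (n : ℝ) * τ ^ (-((n : ℝ) + 1) / 2) + τ ^ (-(n : ℝ) / 2)
  set c := lam / (4 * τ)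
  have hc : 0 < c := by positivity
  have hT : 0 < T := hτ.trans_le hτT
  have hexp : ∀ y : EuclideanSpace ℝ (Fin n),
      exp (-lam * ‖x - y‖ ^ 2 / (4 * τ)) = exp (-c * ‖x - y‖ ^ 2) := fun y => by
    rw [neg_mul, neg_mul, neg_div, mul_div_right_comm]
  have hc_pow : c ^ (-((n : ℝ) / 2)) = (4 / lam) ^ ((n : ℝ) / 2) * τ ^ ((n : ℝ) / 2) := by
    rw [rpow_neg hc.le, ← inv_rpow hc.le, inv_div, ← mul_rpow (by positivity) hτ.le,
      mul_div_right_comm]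
  have hA : A * τ ^ ((n : ℝ) / 2) = n * τ ^ (-(1 : ℝ) / 2) + 1 := by
    rw [add_mul, mul_assoc, ← rpow_add hτ, ← rpow_add hτ,
      show -((n : ℝ) + 1) / 2 + n / 2 = -(1 : ℝ) / 2 by ring,
      show -(n : ℝ) / 2 + n / 2 = 0 by ring, rpow_zero]
  have hGamma : GammaUp ((n : ℝ) / 2) (c * R ^ 2) ≤
      GammaUp ((n : ℝ) / 2) (lam * R ^ 2 / (4 * T)) := by
    refine gammaUp_antitoneOn (by positivity) (mem_Ici.2 (by positivity))
      (mem_Ici.2 (by positivity)) ?_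
    rw [div_mul_eq_mul_div, mul_comm]
    gcongr
  calc _ = A * ∫ y in closedBall x (R + 1) \ closedBall x R, exp (-c * ‖x - y‖ ^ 2) := by
        simp_rw [hexp]
        exact integral_const_mul _ _
    _ ≤ A * (unitSphereArea n *
          (c ^ (-((n : ℝ) / 2)) / 2 * GammaUp ((n : ℝ) / 2) (lam * R ^ 2 / (4 * T)))) := by
        grw [setIntegral_annulus_exp_neg_mul_sq_norm_sub_le hn hc hR x, hGamma]
    _ = _ := by
        rw [hc_pow, ← hA]
        ring

theorem intervalIntegrable_sub_rpow_neg_half (t : ℝ) :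
    IntervalIntegrable (fun s => (t - s) ^ (-(1 : ℝ) / 2)) volume 0 t := by
  simpa using ((intervalIntegral.intervalIntegrable_rpow' (a := 0) (b := t)
    (by norm_num : (-1 : ℝ) < -1 / 2)).comp_sub_left t).symm

theorem integral_sub_rpow_neg_half (t : ℝ) :
    ∫ s in (0 : ℝ)..t, (t - s) ^ (-(1 : ℝ) / 2) = 2 * √t := by
  rw [intervalIntegral.integral_comp_sub_left (fun u : ℝ => u ^ (-(1 : ℝ) / 2)) t, sub_self,
    sub_zero, integral_rpow (Or.inl (by norm_num)), zero_rpow (by norm_num), sqrt_eq_rpow]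
  norm_num
  ring

theorem integral_Icc_setIntegral_annulus_heat_le {n : ℕ} (hn : 1 ≤ n) {lam T R t : ℝ}
    (hlam : 0 < lam) (hR : 0 ≤ R) (ht : 0 ≤ t) (htT : t ≤ T)
    (x : EuclideanSpace ℝ (Fin n)) :
    ∫ s in Icc (0 : ℝ) t, ∫ y in closedBall x (R + 1) \ closedBall x R,
        ((n : ℝ) * (t - s) ^ (-((n : ℝ) + 1) / 2) + (t - s) ^ (-(n : ℝ) / 2)) *
          exp (-lam * ‖x - y‖ ^ 2 / (4 * (t - s))) ≤
      unitSphereArea n / 2 * (4 / lam) ^ ((n : ℝ) / 2) *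
        (T + 2 * n * √T) * GammaUp ((n : ℝ) / 2) (lam * R ^ 2 / (4 * T)) := by
  set K := unitSphereArea n / 2 * (4 / lam) ^ ((n : ℝ) / 2) *
    GammaUp ((n : ℝ) / 2) (lam * R ^ 2 / (4 * T))
  have hT : 0 ≤ T := ht.trans htT
  have hK : 0 ≤ K := by
    have := unitSphereArea_nonneg n hn
    have := gammaUp_nonneg ((n : ℝ) / 2) (z := lam * R ^ 2 / (4 * T)) (by positivity)
    positivity
  have hI := intervalIntegrable_sub_rpow_neg_half t
  have hint : IntegrableOn (fun s => K * (n * (t - s) ^ (-(1 : ℝ) / 2) + 1)) (Icc 0 t) :=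
    (intervalIntegrable_iff_integrableOn_Icc_of_le ht).1
      (((hI.const_mul _).add intervalIntegrable_const).const_mul K)
  calc _ ≤ ∫ s in Icc (0 : ℝ) t, K * (n * (t - s) ^ (-(1 : ℝ) / 2) + 1) := by
        refine integral_mono_of_nonneg ?_ hint ?_ <;>
          filter_upwards [ae_restrict_mem measurableSet_Icc] with s hs
        · refine setIntegral_nonneg (measurableSet_closedBall.diff measurableSet_closedBall)
            fun y _ => ?_
          have := sub_nonneg.2 hs.2
          positivity
        · exact setIntegral_annulus_heat_le hn hlam hR (sub_nonneg.2 hs.2) (by linarith [hs.1]) x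
    _ = K * (n * (2 * √t) + t) := by
        rw [integral_Icc_eq_integral_Ioc, ← intervalIntegral.integral_of_le ht,
          intervalIntegral.integral_const_mul,
          intervalIntegral.integral_add (hI.const_mul _) intervalIntegrable_const,
          intervalIntegral.integral_const_mul, intervalIntegral.integral_const,
          integral_sub_rpow_neg_half, smul_eq_mul, sub_zero, mul_one]
    _ ≤ K * (T + 2 * n * √T) := by
        refine mul_le_mul_of_nonneg_left ?_ hK
        nlinarith [sqrt_le_sqrt htT, sqrt_nonneg t]
    _ = _ := by ring

theorem stmt8 (n : ℕ) (hn : 1 ≤ n) (lam T : ℝ) (hlam : 0 < lam) (hT : 0 < T) :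
    (∀ R : ℝ, 0 < R → ∀ x : EuclideanSpace ℝ (Fin n), ∀ t ∈ Ioc (0 : ℝ) T,
      (∫ s in Icc (0 : ℝ) t, ∫ y in (closedBall x (R + 1) \ closedBall x R),
          ((n : ℝ) * (t - s) ^ (-((n : ℝ) + 1) / 2) + (t - s) ^ (-(n : ℝ) / 2)) *
            Real.exp (-lam * ‖x - y‖ ^ 2 / (4 * (t - s))))
        ≤ (unitSphereArea n / 2) * (4 / lam) ^ ((n : ℝ) / 2) *
            (T + 2 * n * Real.sqrt T) * GammaUp ((n : ℝ) / 2) (lam * R ^ 2 / (4 * T))) ∧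
    Tendsto (fun R : ℝ =>
        (unitSphereArea n / 2) * (4 / lam) ^ ((n : ℝ) / 2) *
          (T + 2 * n * Real.sqrt T) * GammaUp ((n : ℝ) / 2) (lam * R ^ 2 / (4 * T)))
      atTop (nhds 0) := by
  refine ⟨fun R hR x t ht =>
    integral_Icc_setIntegral_annulus_heat_le hn hlam hR.le ht.1.le ht.2 x, ?_⟩
  have harg : Tendsto (fun R : ℝ => lam * R ^ 2 / (4 * T)) atTop atTop :=
    ((tendsto_pow_atTop two_ne_zero).const_mul_atTop hlam).atTop_div_const (by positivity)
  simpa using ((tendsto_gammaUp_atTop _).comp harg).const_mul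
    (unitSphereArea n / 2 * (4 / lam) ^ ((n : ℝ) / 2) * (T + 2 * n * √T))
end

section
/- Let D > 0, T > 0, and let u ∈ C²'¹(ℝ × [0,T]) ∩ L^∞ satisfy ∂_t u − D∂_{xx}u = max{Ju(1−u), 0} on ℝ × (0,T] with u(·,0) = u₀ where 0 ≤ u₀ ≤ 1 on ℝ, and Ju(x,t) = ∫_ℝ φ(x−y)u(y,t)dy with φ ≥ 0, φ ∈ L¹(ℝ), ‖φ‖₁ = 1. Then 0 ≤ u ≤ 1 on ℝ × [0,T]. -/
open MeasureTheory Real Set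
open Filter Topology


/-- Auxiliary: if `deriv f` has derivative `F ≤ -3ε < 0` at `x₀`, `x₀` is a global min of
`f ξ + ε ξ²`, and `deriv f x₀ + 2 ε x₀ ≥ 0`, contradiction (using the left side). -/
lemma space_aux_left (f : ℝ → ℝ) (ε F x₀ : ℝ) (hε : 0 < ε) (hcf : Continuous f)
    (hder : HasDerivAt (deriv f) F x₀) (hF : F ≤ -(3*ε))
    (hmin : ∀ ξ, f x₀ + ε*x₀^2 ≤ f ξ + ε*ξ^2)
    (hc' : 0 ≤ deriv f x₀ + 2*ε*x₀) : False := by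
  set c := deriv f x₀ with hcdef
  have hev : ∀ᶠ ξ in 𝓝[≠] x₀, |slope (deriv f) x₀ ξ - F| < ε/2 :=
    (hasDerivAt_iff_tendsto_slope.mp hder).eventually (eventually_abs_sub_lt F (by linarith))
  rw [eventually_nhdsWithin_iff, Metric.eventually_nhds_iff] at hev
  obtain ⟨δ, hδ, hball⟩ := hev
  -- pointwise two-sided bound on `deriv f` to the left of `x₀`
  have hbound : ∀ ξ, x₀ - δ < ξ → ξ < x₀ →
      c - (F + ε/2)*(x₀ - ξ) < deriv f ξ ∧ deriv f ξ < c - (F - ε/2)*(x₀ - ξ) := by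
    intro ξ h1 h2
    have hξne : ξ ≠ x₀ := ne_of_lt h2
    have hb := hball (show dist ξ x₀ < δ by
        rw [Real.dist_eq, abs_lt]; constructor <;> linarith) (by simpa using hξne)
    rw [slope_def_field, abs_lt] at hb
    have hL : deriv f ξ - c = ((deriv f ξ - c)/(ξ - x₀)) * (ξ - x₀) :=
      (div_mul_cancel₀ _ (sub_ne_zero.mpr hξne)).symm
    constructor
    · nlinarith [hL, mul_pos (show (0:ℝ) < x₀ - ξ by linarith)
        (show 0 < F + ε/2 - (deriv f ξ - c)/(ξ - x₀) by linarith [hb.2])]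
    · nlinarith [hL, mul_pos (show (0:ℝ) < x₀ - ξ by linarith)
        (show 0 < (deriv f ξ - c)/(ξ - x₀) - (F - ε/2) by linarith [hb.1])]
  -- the core monotonicity argument
  have key : ∀ θ : ℝ, 0 < θ → θ ≤ δ/2 → (∀ ξ ∈ Ioo (x₀ - θ) x₀, deriv f ξ ≠ 0) → False := by
    intro θ hθ hθδ hdiff
    have hconth : Continuous (fun ξ : ℝ => f ξ + ε*ξ^2) := by continuity
    have hmono : StrictMonoOn (fun ξ : ℝ => f ξ + ε*ξ^2) (Icc (x₀-θ) x₀) := by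
      apply strictMonoOn_of_deriv_pos (convex_Icc _ _) hconth.continuousOn
      intro ξ hξ
      rw [interior_Icc] at hξ
      have hb := (hbound ξ (by linarith [hξ.1]) hξ.2).1
      have hDf : DifferentiableAt ℝ f ξ := differentiableAt_of_deriv_ne_zero (hdiff ξ hξ)
      have hh : HasDerivAt (fun ξ : ℝ => f ξ + ε*ξ^2) (deriv f ξ + ε*(2*ξ)) ξ :=
        hDf.hasDerivAt.add (by simpa using (hasDerivAt_pow 2 ξ).const_mul ε)
      rw [hh.deriv]
      have hFs : (F + ε/2)*(x₀ - ξ) ≤ (-(5*ε/2))*(x₀ - ξ) :=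
        mul_le_mul_of_nonneg_right (by linarith) (by linarith [hξ.2])
      nlinarith [hb, hFs, hc', mul_pos hε (show (0:ℝ) < x₀ - ξ by linarith [hξ.2])]
    have h1 : f (x₀ - θ) + ε*(x₀ - θ)^2 < f x₀ + ε*x₀^2 :=
      hmono ⟨le_rfl, by linarith⟩ ⟨by linarith, le_rfl⟩ (by linarith)
    linarith [hmin (x₀ - θ)]
  rcases le_or_gt 0 c with hc | hc
  · refine key (δ/2) (by linarith) le_rfl (fun ξ hξ => ?_)
    have hb := (hbound ξ (by linarith [hξ.1]) hξ.2).1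
    have : 0 < deriv f ξ := by
      nlinarith [hb, hc, mul_nonneg (show (0:ℝ) ≤ -(F + ε/2) by linarith)
        (show (0:ℝ) ≤ x₀ - ξ by linarith [hξ.2])]
    exact ne_of_gt this
  · set B := ε/2 - F with hBdef
    have hB : 0 < B := by simp only [hBdef]; linarith
    refine key (min (δ/2) (-c/(2*B))) (lt_min (by linarith) (div_pos (by linarith) (by linarith))) (min_le_left _ _)
      (fun ξ hξ => ?_)
    have hξδ : x₀ - δ < ξ := by
      have := hξ.1; have h2 := min_le_left (δ/2) (-c/(2*B)); linarith
    have hb := (hbound ξ hξδ hξ.2).2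
    have hθ2 : x₀ - ξ < -c/(2*B) := by
      have := hξ.1; have h2 := min_le_right (δ/2) (-c/(2*B)); linarith
    have hBs : B*(x₀ - ξ) ≤ B*(-c/(2*B)) :=
      mul_le_mul_of_nonneg_left hθ2.le hB.le
    have hBeq : B*(-c/(2*B)) = -c/2 := by field_simp
    have : deriv f ξ < 0 := by nlinarith [hb, hBs, hBeq, hc]
    exact ne_of_lt this

lemma space_aux (f : ℝ → ℝ) (ε F x₀ : ℝ) (hε : 0 < ε) (hcf : Continuous f)
    (hder : HasDerivAt (deriv f) F x₀) (hF : F ≤ -(3*ε))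
    (hmin : ∀ ξ, f x₀ + ε*x₀^2 ≤ f ξ + ε*ξ^2) : False := by
  rcases le_or_gt 0 (deriv f x₀ + 2*ε*x₀) with hc' | hc'
  · exact space_aux_left f ε F x₀ hε hcf hder hF hmin hc'
  · -- reflect
    set g : ℝ → ℝ := fun ξ => f (-ξ) with hgdef
    have hgd : deriv g = fun ξ => -deriv f (-ξ) := funext fun ξ => deriv_comp_neg f ξ
    have hgder : HasDerivAt (deriv g) F (-x₀) := by
      rw [hgd]
      have h1 : HasDerivAt (fun ξ : ℝ => deriv f (-ξ)) (-F) (-x₀) := by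
        have h0 : HasDerivAt (deriv f) F (- -x₀) := by rwa [neg_neg]
        have := h0.comp (-x₀) (hasDerivAt_neg (-x₀))
        simpa [Function.comp_def] using this
      have h2 := h1.neg; rw [neg_neg] at h2; exact h2
    refine space_aux_left g ε F (-x₀) hε (hcf.comp continuous_neg) hgder hF
      (fun ξ => by simpa [hgdef] using hmin (-ξ)) ?_
    rw [hgd]; simp only; rw [neg_neg]
    nlinarith [hc']

lemma keymin (T D : ℝ) (hT : 0 < T) (hD : 0 < D) (g gt gxx : ℝ → ℝ → ℝ) (M : ℝ)
    (hcont : ContinuousOn (fun p : ℝ × ℝ => g p.1 p.2) (univ ×ˢ Icc (0:ℝ) T))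
    (hbdd : ∀ x, ∀ t ∈ Icc (0:ℝ) T, |g x t| ≤ M)
    (hgt : ∀ x, ∀ t ∈ Icc (0:ℝ) T,
      HasDerivWithinAt (fun τ => g x τ) (gt x t) (Icc (0:ℝ) T) t)
    (hgxx : ∀ t ∈ Icc (0:ℝ) T, ∀ x, HasDerivAt (deriv (fun ξ => g ξ t)) (gxx x t) x)
    (hineq : ∀ x, ∀ t ∈ Ioc (0:ℝ) T, g x t < 0 → 0 ≤ gt x t - D * gxx x t)
    (h0 : ∀ x, 0 ≤ g x 0) : ∀ x, ∀ t ∈ Icc (0:ℝ) T, 0 ≤ g x t := by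
  intro x t ht
  -- reduction to the perturbed statement
  suffices hval : ∀ ε > (0:ℝ), 0 ≤ g x t + ε*(3*D*t + x^2) by
    by_contra hneg
    push_neg at hneg
    have hc : 0 ≤ 3*D*t + x^2 := by nlinarith [ht.1, sq_nonneg x]
    have hεpos : 0 < -g x t / (3*D*t + x^2 + 1) := div_pos (by linarith) (by linarith)
    have h1 := hval _ hεpos
    have h2 : (g x t + (-g x t / (3*D*t + x^2 + 1))*(3*D*t + x^2)) * (3*D*t + x^2 + 1)
        = g x t := by field_simp; ring
    nlinarith [h1, h2]
  intro ε hε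
  have hM0 : 0 ≤ M := le_trans (abs_nonneg _) (hbdd 0 0 ⟨le_rfl, hT.le⟩)
  set R := Real.sqrt ((2*M+1)/ε) with hRdef
  have hR0 : 0 ≤ R := Real.sqrt_nonneg _
  have hR2 : ε * R^2 = 2*M+1 := by
    rw [hRdef, sq_sqrt (by positivity)]; field_simp
  set v : ℝ × ℝ → ℝ := fun p => g p.1 p.2 + ε*(3*D*p.2 + p.1^2) with hvdef
  have hKc : IsCompact (Icc (-R) R ×ˢ Icc (0:ℝ) T) := isCompact_Icc.prod isCompact_Icc
  have hKne : (Icc (-R) R ×ˢ Icc (0:ℝ) T).Nonempty :=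
    ⟨(0,0), ⟨⟨neg_nonpos.2 hR0, hR0⟩, le_rfl, hT.le⟩⟩
  have hsub : Icc (-R) R ×ˢ Icc (0:ℝ) T ⊆ univ ×ˢ Icc (0:ℝ) T :=
    fun p hp => ⟨mem_univ _, hp.2⟩
  have hVc : ContinuousOn v (Icc (-R) R ×ˢ Icc (0:ℝ) T) :=
    (hcont.mono hsub).add (Continuous.continuousOn (by fun_prop))
  obtain ⟨p₀, hp₀, hminK⟩ := hKc.exists_isMinOn hKne hVc
  obtain ⟨x₀, t₀⟩ := p₀
  have hx₀ : x₀ ∈ Icc (-R) R := hp₀.1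
  have ht₀ : t₀ ∈ Icc (0:ℝ) T := hp₀.2
  have hm_le : v (x₀, t₀) ≤ M := by
    have h1 := hminK (Set.mem_prod.mpr ⟨⟨neg_nonpos.2 hR0, hR0⟩, le_rfl, hT.le⟩ :
      ((0:ℝ),(0:ℝ)) ∈ Icc (-R) R ×ˢ Icc (0:ℝ) T)
    have h2 := (abs_le.mp (hbdd 0 0 ⟨le_rfl, hT.le⟩)).2
    simp only [hvdef] at h1 ⊢
    norm_num at h1
    linarith
  have hglobal : ∀ ξ, ∀ s ∈ Icc (0:ℝ) T, v (x₀, t₀) ≤ v (ξ, s) := by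
    intro ξ s hs
    by_cases hξ : ξ ∈ Icc (-R) R
    · exact hminK (Set.mem_prod.mpr ⟨hξ, hs⟩)
    · have h1 : R < |ξ| := by
        rw [mem_Icc, ← abs_le] at hξ; exact lt_of_not_ge hξ
      have h2 : R^2 < ξ^2 := by
        rw [← sq_abs ξ]; nlinarith [abs_nonneg ξ]
      have h3 := (abs_le.mp (hbdd ξ s hs)).1
      have h4 : 0 ≤ 3*D*s := mul_nonneg (by linarith) hs.1
      have h5 : ε * R^2 < ε * ξ^2 := by nlinarith
      have hm_le' := hm_le
      simp only [hvdef] at hm_le' ⊢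
      nlinarith [hm_le']
  rcases le_or_gt 0 (v (x₀, t₀)) with hm | hm
  · have h6 := hglobal x t ht
    simp only [hvdef] at h6 hm
    linarith
  exfalso
  simp only [hvdef] at hm
  have ht₀0 : 0 < t₀ := by
    rcases eq_or_lt_of_le ht₀.1 with h | h
    · exfalso
      have h1 := h0 x₀
      rw [← h] at hm
      nlinarith [sq_nonneg x₀, hε]
    · exact h
  have hgneg : g x₀ t₀ < 0 := by
    have h1 : 0 ≤ ε*(3*D*t₀ + x₀^2) := by
      have : 0 ≤ 3*D*t₀ + x₀^2 := by nlinarith [sq_nonneg x₀]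
      positivity
    linarith
  have hQ := hineq x₀ t₀ ⟨ht₀0, ht₀.2⟩ hgneg
  -- time derivative at the minimum is nonpositive
  have hψd : HasDerivWithinAt (fun τ => g x₀ τ + ε*(3*D*τ + x₀^2))
      (gt x₀ t₀ + ε*(3*D)) (Icc (0:ℝ) T) t₀ := by
    refine (hgt x₀ t₀ ht₀).add (HasDerivAt.hasDerivWithinAt ?_)
    have h1 : HasDerivAt (fun τ : ℝ => 3*D*τ) (3*D) t₀ := by
      simpa using (hasDerivAt_id t₀).const_mul (3*D)
    simpa using (h1.add_const (x₀^2)).const_mul ε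
  have hd0 : gt x₀ t₀ + ε*(3*D) ≤ 0 := by
    have hmono := hψd.mono (Icc_subset_Icc_right ht₀.2)
    rw [hasDerivWithinAt_iff_tendsto_slope] at hmono
    rw [Icc_sdiff_right] at hmono
    have hne : (𝓝[Ico (0:ℝ) t₀] t₀).NeBot := by
      apply mem_closure_iff_nhdsWithin_neBot.mp
      rw [closure_Ico (ne_of_lt ht₀0)]
      exact ⟨ht₀0.le, le_rfl⟩
    refine le_of_tendsto hmono (eventually_of_mem self_mem_nhdsWithin ?_)
    intro τ hτ
    rw [slope_def_field]
    apply div_nonpos_iff.mpr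
    refine Or.inl ⟨?_, by linarith [hτ.2]⟩
    have h1 := hglobal x₀ τ ⟨hτ.1, le_trans hτ.2.le ht₀.2⟩
    simp only [hvdef] at h1
    linarith
  have hgxx_le : gxx x₀ t₀ ≤ -(3*ε) := by
    have h5 : D * gxx x₀ t₀ ≤ D * (-(3*ε)) := by nlinarith
    exact le_of_mul_le_mul_left h5 hD
  -- spatial part
  have hfc : Continuous (fun ξ => g ξ t₀) := by
    rw [← continuousOn_univ]
    have heq : (fun ξ : ℝ => g ξ t₀) = (fun p : ℝ × ℝ => g p.1 p.2) ∘ (fun ξ : ℝ => (ξ, t₀)) :=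
      rfl
    rw [heq]
    exact hcont.comp (continuous_id.prodMk continuous_const).continuousOn
      (fun ξ _ => ⟨mem_univ _, ht₀⟩)
  refine space_aux (fun ξ => g ξ t₀) ε (gxx x₀ t₀) x₀ hε hfc (hgxx t₀ ht₀ x₀) hgxx_le ?_
  intro ξ
  have h1 := hglobal ξ t₀ ht₀
  simp only [hvdef] at h1
  nlinarith [h1]

theorem stmt17 (T D : ℝ) (hT : 0 < T) (hD : 0 < D)
    (u ut uxx : ℝ → ℝ → ℝ) (u₀ : ℝ → ℝ)
    -- u ∈ C²'¹(ℝ × [0,T]) ∩ L^∞ :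
    (hucont : ContinuousOn (fun p : ℝ × ℝ => u p.1 p.2) (univ ×ˢ Icc (0 : ℝ) T))
    (M : ℝ) (hubdd : ∀ x, ∀ t ∈ Icc (0 : ℝ) T, |u x t| ≤ M)
    (hut : ∀ x, ∀ t ∈ Icc (0 : ℝ) T,
      HasDerivWithinAt (fun τ => u x τ) (ut x t) (Icc (0 : ℝ) T) t)
    (huxx : ∀ t ∈ Icc (0 : ℝ) T, ∀ x,
      HasDerivAt (deriv (fun ξ => u ξ t)) (uxx x t) x)
    -- the kernel :
    (φ : ℝ → ℝ) (hφ0 : ∀ x, 0 ≤ φ x) (hφ1 : Integrable φ)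
    (hφnorm : (∫ y, φ y) = 1)
    -- the equation on ℝ × (0,T] :
    (hPDE : ∀ x, ∀ t ∈ Ioc (0 : ℝ) T,
      ut x t - D * uxx x t = max ((∫ y, φ (x - y) * u y t) * (1 - u x t)) 0)
    -- initial data :
    (hinit : ∀ x, u x 0 = u₀ x)
    (hu₀ : ∀ x, 0 ≤ u₀ x ∧ u₀ x ≤ 1) :
    ∀ x, ∀ t ∈ Icc (0 : ℝ) T, 0 ≤ u x t ∧ u x t ≤ 1 := by
  -- lower bound
  have hpos : ∀ x, ∀ t ∈ Icc (0:ℝ) T, 0 ≤ u x t := by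
    refine keymin T D hT hD u ut uxx M hucont hubdd hut huxx ?_ ?_
    · intro x t htIoc _
      have h1 := hPDE x t htIoc
      have h2 := le_max_right ((∫ y, φ (x - y) * u y t) * (1 - u x t)) 0
      linarith
    · intro x
      rw [hinit]
      exact (hu₀ x).1
  -- upper bound via g = 1 - u
  have hup : ∀ x, ∀ t ∈ Icc (0:ℝ) T, 0 ≤ 1 - u x t := by
    refine keymin T D hT hD (fun x t => 1 - u x t) (fun x t => -(ut x t))
      (fun x t => -(uxx x t)) (M + 1) (continuousOn_const.sub hucont) ?_ ?_ ?_ ?_ ?_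
    · intro x t ht
      have h1 := abs_le.mp (hubdd x t ht)
      rw [abs_le]
      refine ⟨?_, ?_⟩
      · show -(M+1) ≤ 1 - u x t; linarith [h1.1, h1.2]
      · show 1 - u x t ≤ M+1; linarith [h1.1, h1.2]
    · intro x t ht
      exact (hut x t ht).const_sub 1
    · intro t ht x
      have h1 : (deriv (fun ξ => (1:ℝ) - u ξ t)) = fun ξ => -deriv (fun ξ => u ξ t) ξ :=
        funext fun ξ => deriv_const_sub 1
      rw [h1]
      exact (huxx t ht x).neg
    · intro x t htIoc hneg
      have h1 : 1 - u x t < 0 := hneg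
      have hJ : 0 ≤ ∫ y, φ (x - y) * u y t :=
        integral_nonneg fun y => mul_nonneg (hφ0 _) (hpos y t ⟨htIoc.1.le, htIoc.2⟩)
      have hmax : max ((∫ y, φ (x - y) * u y t) * (1 - u x t)) 0 = 0 :=
        max_eq_right (mul_nonpos_iff.mpr (Or.inl ⟨hJ, h1.le⟩))
      have h2 := hPDE x t htIoc
      rw [hmax] at h2
      show (0:ℝ) ≤ -ut x t - D * -(uxx x t)
      linarith
    · intro x
      show (0:ℝ) ≤ 1 - u x 0
      rw [hinit]
      linarith [(hu₀ x).2]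
  intro x t ht
  exact ⟨hpos x t ht, by linarith [hup x t ht]⟩
end
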